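/- arXiv:0802.0295 — 4 statements merged into one kernel-verified Lean document; each statement's English description precedes it below -/
import Mathlib

section
/- Let n ≥ 3 be an integer, ξ ∈ ℝⁿ and ε > 0, and let u_{(ξ,ε)} be the standard bubble. Then the function φ(x) = ((ε² − |x−ξ|²)/(ε² + |x−ξ|²)) · u_{(ξ,ε)}(x) satisfies the linearized equation Δφ(x) + n(n+2) · u_{(ξ,ε)}(x)^{4/(n−2)} · φ(x) = 0 for every x ∈ ℝⁿ. -/
/-!
Both `φ` and the bubble are radial about `ξ`: `φ x = g ‖x - ξ‖²` with
`g t = ε^((n-2)/2) (ε² - t) (ε² + t)^(-n/2)`. For any such profile the Laplacian is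
`2n g'(t) + 4t g''(t)` at `t = ‖x - ξ‖²`, and `u^(4/(n-2)) = ε²/(ε² + t)²`, so the linearized
equation becomes a one-variable identity between `g`, `g'` and `g''`.
-/

/-- The standard bubble `u_{(ξ,ε)}(x) = (ε/(ε² + |x−ξ|²))^{(n−2)/2}` on `ℝⁿ`. -/
noncomputable def bubble {n : ℕ} (ξ : EuclideanSpace ℝ (Fin n)) (ε : ℝ)
    (x : EuclideanSpace ℝ (Fin n)) : ℝ :=
  (ε / (ε ^ 2 + ‖x - ξ‖ ^ 2)) ^ (((n : ℝ) - 2) / 2)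

/-- The Euclidean Laplacian: the sum of the second partial derivatives in the
coordinate directions. -/
noncomputable def eLaplacian {n : ℕ} (f : EuclideanSpace ℝ (Fin n) → ℝ)
    (x : EuclideanSpace ℝ (Fin n)) : ℝ :=
  ∑ i : Fin n,
    iteratedFDeriv ℝ 2 f x ![EuclideanSpace.single i 1, EuclideanSpace.single i 1]

open Real

section Radial

variable {E : Type*} [NormedAddCommGroup E] [InnerProductSpace ℝ E]
  {g g' g'' : ℝ → ℝ} (ξ : E)

lemma hasFDerivAt_radial (hg : ∀ t, 0 ≤ t → HasDerivAt g (g' t) t) (x : E) :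
    HasFDerivAt (fun y => g (‖y - ξ‖ ^ 2))
      (g' (‖x - ξ‖ ^ 2) • (2 : ℝ) • innerSL ℝ (x - ξ)) x :=
  ((hg _ (sq_nonneg ‖x - ξ‖)).comp_hasFDerivAt x (hasFDerivAt_sub_const ξ).norm_sq).congr_fderiv
    (by ext v; simp)

lemma iteratedFDeriv_two_radial_apply (hg : ∀ t, 0 ≤ t → HasDerivAt g (g' t) t)
    (hg' : ∀ t, 0 ≤ t → HasDerivAt g' (g'' t) t) (x v w : E) :
    iteratedFDeriv ℝ 2 (fun y => g (‖y - ξ‖ ^ 2)) x ![v, w] =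
      2 * g' (‖x - ξ‖ ^ 2) * inner ℝ v w
        + 4 * g'' (‖x - ξ‖ ^ 2) * inner ℝ (x - ξ) v * inner ℝ (x - ξ) w := by
  have hlin : HasFDerivAt (fun y : E => (2 : ℝ) • innerSL ℝ (y - ξ)) ((2 : ℝ) • innerSL ℝ) x :=
    ((innerSL ℝ).hasFDerivAt.comp x (hasFDerivAt_sub_const ξ)).const_smul (2 : ℝ)
  have h2 := ((hasFDerivAt_radial ξ hg' x).fun_smul hlin).fderiv
  rw [iteratedFDeriv_two_apply, funext fun y => (hasFDerivAt_radial ξ hg y).fderiv, h2]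
  simp only [Matrix.cons_val_zero, Matrix.cons_val_one, add_apply, smul_apply,
    ContinuousLinearMap.smulRight_apply, innerSL_apply_apply, smul_eq_mul]
  erw [innerSL_apply_apply]
  ring

end Radial

lemma eLaplacian_radial {n : ℕ} {g g' g'' : ℝ → ℝ} (ξ : EuclideanSpace ℝ (Fin n))
    (hg : ∀ t, 0 ≤ t → HasDerivAt g (g' t) t) (hg' : ∀ t, 0 ≤ t → HasDerivAt g' (g'' t) t)
    (x : EuclideanSpace ℝ (Fin n)) :
    eLaplacian (fun y => g (‖y - ξ‖ ^ 2)) x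
      = 2 * n * g' (‖x - ξ‖ ^ 2) + 4 * ‖x - ξ‖ ^ 2 * g'' (‖x - ξ‖ ^ 2) := by
  set T := ‖x - ξ‖ ^ 2 with hT
  have hT' : T = ∑ i, (x - ξ) i * (x - ξ) i := by
    rw [hT, EuclideanSpace.real_norm_sq_eq]
    simp only [sq]
  have hterm : ∀ i, iteratedFDeriv ℝ 2 (fun y => g (‖y - ξ‖ ^ 2)) x
      ![EuclideanSpace.single i 1, EuclideanSpace.single i 1]
        = 2 * g' T + 4 * g'' T * ((x - ξ) i * (x - ξ) i) := by
    intro i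
    rw [iteratedFDeriv_two_radial_apply ξ hg hg', ← hT]
    simp [EuclideanSpace.inner_single_right]
    ring
  simp only [eLaplacian, hterm, Finset.sum_add_distrib, ← Finset.mul_sum, ← hT', Finset.sum_const,
    Finset.card_univ, Fintype.card_fin, nsmul_eq_mul]
  ring

section Profile

variable {a t : ℝ} (p : ℝ)

lemma hasDerivAt_add_rpow (ht : 0 < a + t) :
    HasDerivAt (fun u => (a + u) ^ p) (p * (a + t) ^ (p - 1)) t := by
  simpa using ((hasDerivAt_id t).const_add a).rpow_const (p := p) (Or.inl ht.ne')

lemma hasDerivAt_sub_mul_add_rpow (ht : 0 < a + t) :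
    HasDerivAt (fun u => (a - u) * (a + u) ^ p)
      (-(a + t) ^ p + p * ((a - t) * (a + t) ^ (p - 1))) t :=
  (((hasDerivAt_id t).const_sub a).mul (hasDerivAt_add_rpow p ht)).congr_deriv (by simp; ring)

lemma hasDerivAt_deriv_sub_mul_add_rpow (ht : 0 < a + t) :
    HasDerivAt (fun u => -(a + u) ^ p + p * ((a - u) * (a + u) ^ (p - 1)))
      (-2 * p * (a + t) ^ (p - 1) + p * (p - 1) * (a - t) * (a + t) ^ (p - 2)) t :=
  ((hasDerivAt_add_rpow p ht).neg.add
      ((hasDerivAt_sub_mul_add_rpow (p - 1) ht).const_mul p)).congr_deriv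
    (by rw [show p - 1 - 1 = p - 2 by ring]; ring)

end Profile

/-- With `g t = C (a - t) (a + t) ^ (-n/2)`, this is `2n g' + 4t g'' + n(n+2) a/(a+t)² g = 0`;
it reduces to a polynomial identity once `(a + t) ^ (-n/2 - 2)` is factored out. -/
lemma linearized_profile_identity (n a t C : ℝ) (ht : 0 < a + t) :
    2 * n * (C * (-(a + t) ^ (-(n / 2))
        + -(n / 2) * ((a - t) * (a + t) ^ (-(n / 2) - 1))))
      + 4 * t * (C * (-2 * -(n / 2) * (a + t) ^ (-(n / 2) - 1)
        + -(n / 2) * (-(n / 2) - 1) * (a - t) * (a + t) ^ (-(n / 2) - 2)))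
      + n * (n + 2) * (a / (a + t) ^ 2) * (C * ((a - t) * (a + t) ^ (-(n / 2)))) = 0 := by
  have h1 : (a + t) ^ (-(n / 2) - 1) = (a + t) ^ (-(n / 2) - 2) * (a + t) := by
    rw [← rpow_add_one ht.ne']; ring_nf
  have h0 : (a + t) ^ (-(n / 2)) = (a + t) ^ (-(n / 2) - 2) * (a + t) ^ 2 := by
    rw [← rpow_natCast, ← rpow_add ht]; norm_num
  rw [h0, h1]
  field_simp
  ring

lemma bubble_rpow_four_div {n : ℕ} (hn : (n : ℝ) ≠ 2) (ξ x : EuclideanSpace ℝ (Fin n)) {ε : ℝ}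
    (hε : 0 ≤ ε) :
    bubble ξ ε x ^ (4 / ((n : ℝ) - 2)) = ε ^ 2 / (ε ^ 2 + ‖x - ξ‖ ^ 2) ^ 2 := by
  have hn' : (n : ℝ) - 2 ≠ 0 := sub_ne_zero.mpr hn
  rw [bubble, ← rpow_mul (by positivity),
    show ((n : ℝ) - 2) / 2 * (4 / ((n : ℝ) - 2)) = (2 : ℕ) by field_simp; norm_num,
    rpow_natCast, div_pow]

lemma sub_div_add_mul_bubble {n : ℕ} (ξ x : EuclideanSpace ℝ (Fin n)) {ε : ℝ} (hε : 0 < ε) :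
    (ε ^ 2 - ‖x - ξ‖ ^ 2) / (ε ^ 2 + ‖x - ξ‖ ^ 2) * bubble ξ ε x
      = ε ^ (((n : ℝ) - 2) / 2)
        * ((ε ^ 2 - ‖x - ξ‖ ^ 2) * (ε ^ 2 + ‖x - ξ‖ ^ 2) ^ (-((n : ℝ) / 2))) := by
  have hA : 0 < ε ^ 2 + ‖x - ξ‖ ^ 2 := by positivity
  rw [bubble, div_rpow hε.le hA.le,
    show -((n : ℝ) / 2) = -((((n : ℝ) - 2) / 2) + 1) by ring, rpow_neg hA.le, rpow_add_one hA.ne']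
  field_simp

theorem stmt_1 (n : ℕ) (hn : 3 ≤ n) (ξ : EuclideanSpace ℝ (Fin n)) (ε : ℝ) (hε : 0 < ε)
    (φ : EuclideanSpace ℝ (Fin n) → ℝ)
    (hφ : ∀ x, φ x = (ε ^ 2 - ‖x - ξ‖ ^ 2) / (ε ^ 2 + ‖x - ξ‖ ^ 2) * bubble ξ ε x) :
    ∀ x, eLaplacian φ x
        + (n : ℝ) * ((n : ℝ) + 2) * bubble ξ ε x ^ ((4 : ℝ) / ((n : ℝ) - 2)) * φ x = 0 := by
  have hn2 : (n : ℝ) ≠ 2 := by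
    have : (3 : ℝ) ≤ n := by exact_mod_cast hn
    linarith
  have hpos : ∀ t : ℝ, 0 ≤ t → 0 < ε ^ 2 + t := fun t ht => by positivity
  set C := ε ^ (((n : ℝ) - 2) / 2)
  have hφ' : φ = fun y => C * ((ε ^ 2 - ‖y - ξ‖ ^ 2) * (ε ^ 2 + ‖y - ξ‖ ^ 2) ^ (-((n : ℝ) / 2))) :=
    funext fun y => (hφ y).trans (sub_div_add_mul_bubble ξ y hε)
  intro x
  rw [hφ', eLaplacian_radial ξ
      (fun t ht => (hasDerivAt_sub_mul_add_rpow _ (hpos t ht)).const_mul C)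
      (fun t ht => (hasDerivAt_deriv_sub_mul_add_rpow _ (hpos t ht)).const_mul C) x,
    bubble_rpow_four_div hn2 ξ x hε.le]
  exact linearized_profile_identity n (ε ^ 2) _ C (hpos _ (sq_nonneg _))
end

section
/- Let n ≥ 3 be an integer, ξ ∈ ℝⁿ and ε > 0, and let u_{(ξ,ε)} be the standard bubble. Then for each index k ∈ {1,…,n}, the function φ_k(x) = (2ε(x_k − ξ_k)/(ε² + |x−ξ|²)) · u_{(ξ,ε)}(x) satisfies the linearized equation Δφ_k(x) + n(n+2) · u_{(ξ,ε)}(x)^{4/(n−2)} · φ_k(x) = 0 for every x ∈ ℝⁿ. -/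
open InnerProductSpace Laplacian Module
open scoped RealInnerProductSpace

theorem ContDiffAt.iteratedFDeriv_two_apply_eq_fderiv_fderiv_apply {𝕜 E F : Type*}
    [NontriviallyNormedField 𝕜] [NormedAddCommGroup E] [NormedSpace 𝕜 E]
    [NormedAddCommGroup F] [NormedSpace 𝕜 F] {f : E → F} {x : E} (hf : ContDiffAt 𝕜 2 f x)
    (v w : E) :
    iteratedFDeriv 𝕜 2 f x ![v, w] = fderiv 𝕜 (fun y => fderiv 𝕜 f y w) x v := by
  have hf' : DifferentiableAt 𝕜 (fderiv 𝕜 f) x :=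
    (hf.fderiv_right (m := 1) (by norm_num)).differentiableAt one_ne_zero
  rw [iteratedFDeriv_two_apply, fderiv_clm_apply hf' (differentiableAt_const w)]
  simp

section

variable {E : Type*} [NormedAddCommGroup E] [InnerProductSpace ℝ E] {c : ℝ}

theorem hasFDerivAt_rpow_const_add_norm_sub_sq (hc : 0 < c) (ξ x : E) (p : ℝ) :
    HasFDerivAt (fun y => (c + ‖y - ξ‖ ^ 2) ^ p)
      ((2 * p * (c + ‖x - ξ‖ ^ 2) ^ (p - 1)) • innerSL ℝ (x - ξ)) x := by
  have hD : HasFDerivAt (fun y => c + ‖y - ξ‖ ^ 2) ((2 : ℕ) • innerSL ℝ (x - ξ)) x := by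
    simpa using (((hasFDerivAt_id x).sub_const ξ).norm_sq).const_add c
  convert hD.rpow_const (p := p) (Or.inl (by positivity)) using 1
  ext v
  simp
  ring

theorem hasFDerivAt_inner_sub (ξ w x : E) :
    HasFDerivAt (fun y => ⟪w, y - ξ⟫) (innerSL ℝ w) x := by
  simpa [inner_sub_right] using ((innerSL ℝ w).hasFDerivAt (x := x)).sub_const ⟪w, ξ⟫

theorem fderiv_inner_mul_rpow_apply (hc : 0 < c) (ξ w v y : E) (p : ℝ) :
    fderiv ℝ (fun y => ⟪w, y - ξ⟫ * (c + ‖y - ξ‖ ^ 2) ^ p) y v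
      = ⟪w, v⟫ * (c + ‖y - ξ‖ ^ 2) ^ p
        + 2 * p * ⟪w, y - ξ⟫ * ⟪v, y - ξ⟫ * (c + ‖y - ξ‖ ^ 2) ^ (p - 1) := by
  rw [((hasFDerivAt_inner_sub ξ w y).fun_mul
    (hasFDerivAt_rpow_const_add_norm_sub_sq hc ξ y p)).fderiv]
  simp only [add_apply, smul_apply, innerSL_apply_apply, smul_eq_mul, real_inner_comm v]
  ring

theorem fderiv_fderiv_inner_mul_rpow_apply (hc : 0 < c) (ξ w v x : E) (p : ℝ) :
    fderiv ℝ (fun y => fderiv ℝ (fun z => ⟪w, z - ξ⟫ * (c + ‖z - ξ‖ ^ 2) ^ p) y v) x v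
      = 2 * p * (2 * ⟪w, v⟫ * ⟪v, x - ξ⟫ + ⟪w, x - ξ⟫ * ‖v‖ ^ 2) * (c + ‖x - ξ‖ ^ 2) ^ (p - 1)
        + 4 * p * (p - 1) * ⟪w, x - ξ⟫ * ⟪v, x - ξ⟫ ^ 2 * (c + ‖x - ξ‖ ^ 2) ^ (p - 2) := by
  simp_rw [fderiv_inner_mul_rpow_apply hc ξ w v _ p]
  rw [(((hasFDerivAt_rpow_const_add_norm_sub_sq hc ξ x p).const_mul ⟪w, v⟫).fun_add
    ((((hasFDerivAt_inner_sub ξ w x).const_mul (2 * p)).fun_mul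
      (hasFDerivAt_inner_sub ξ v x)).fun_mul
      (hasFDerivAt_rpow_const_add_norm_sub_sq hc ξ x (p - 1)))).fderiv]
  simp only [add_apply, smul_apply,
    innerSL_apply_apply, smul_eq_mul, real_inner_self_eq_norm_sq, real_inner_comm v]
  rw [show p - 1 - 1 = p - 2 by ring]
  ring

theorem contDiff_inner_mul_rpow (hc : 0 < c) (ξ w : E) (p : ℝ) {m : ℕ∞} :
    ContDiff ℝ m (fun y => ⟪w, y - ξ⟫ * (c + ‖y - ξ‖ ^ 2) ^ p) :=
  (contDiff_const.inner ℝ (contDiff_id.sub contDiff_const)).mul <|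
    (contDiff_const.add ((contDiff_id.sub contDiff_const).norm_sq ℝ)).rpow_const_of_ne
      fun y => by positivity

variable [FiniteDimensional ℝ E]

theorem laplacian_inner_mul_rpow (hc : 0 < c) (ξ w x : E) (p : ℝ) :
    Δ (fun y => ⟪w, y - ξ⟫ * (c + ‖y - ξ‖ ^ 2) ^ p) x
      = 2 * p * ⟪w, x - ξ⟫ * ((finrank ℝ E + 2) * (c + ‖x - ξ‖ ^ 2) ^ (p - 1)
        + 2 * (p - 1) * ‖x - ξ‖ ^ 2 * (c + ‖x - ξ‖ ^ 2) ^ (p - 2)) := by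
  set b := stdOrthonormalBasis ℝ E
  rw [laplacian_eq_iteratedFDeriv_orthonormalBasis _ b]
  have hg := (contDiff_inner_mul_rpow hc ξ w p (m := 2)).contDiffAt (x := x)
  simp_rw [hg.iteratedFDeriv_two_apply_eq_fderiv_fderiv_apply,
    fderiv_fderiv_inner_mul_rpow_apply hc]
  have h_norm : ∑ i, ‖b i‖ ^ 2 = finrank ℝ E := by simp [b.orthonormal.1]
  calc
    _ = 4 * p * (c + ‖x - ξ‖ ^ 2) ^ (p - 1) * ∑ i, ⟪w, b i⟫ * ⟪b i, x - ξ⟫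
        + 2 * p * ⟪w, x - ξ⟫ * (c + ‖x - ξ‖ ^ 2) ^ (p - 1) * ∑ i, ‖b i‖ ^ 2
        + 4 * p * (p - 1) * ⟪w, x - ξ⟫ * (c + ‖x - ξ‖ ^ 2) ^ (p - 2)
          * ∑ i, ⟪b i, x - ξ⟫ ^ 2 := by
      simp only [Finset.mul_sum, ← Finset.sum_add_distrib]
      congr 1 with i
      ring
    _ = _ := by
      rw [b.sum_inner_mul_inner, h_norm, b.sum_sq_inner_right]
      ring

theorem laplacian_inner_mul_rpow_neg_half_finrank (hc : 0 < c) (ξ w x : E) :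
    Δ (fun y => ⟪w, y - ξ⟫ * (c + ‖y - ξ‖ ^ 2) ^ (-(finrank ℝ E : ℝ) / 2)) x
      = -(finrank ℝ E * (finrank ℝ E + 2)) * (c / (c + ‖x - ξ‖ ^ 2) ^ 2)
        * (⟪w, x - ξ⟫ * (c + ‖x - ξ‖ ^ 2) ^ (-(finrank ℝ E : ℝ) / 2)) := by
  rw [laplacian_inner_mul_rpow hc]
  have hD : 0 < c + ‖x - ξ‖ ^ 2 := by positivity
  have h_norm : ‖x - ξ‖ ^ 2 = (c + ‖x - ξ‖ ^ 2) - c := by ring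
  set D := c + ‖x - ξ‖ ^ 2
  rw [Real.rpow_sub hD, Real.rpow_sub hD, Real.rpow_one, Real.rpow_two, h_norm]
  field_simp
  ring

end

theorem eLaplacian_eq_laplacian {n : ℕ} (f : EuclideanSpace ℝ (Fin n) → ℝ) :
    eLaplacian f = Δ f := by
  rw [laplacian_eq_iteratedFDeriv_orthonormalBasis f (EuclideanSpace.basisFun (Fin n) ℝ)]
  ext x
  simp [eLaplacian]

section

variable {n : ℕ} (ξ : EuclideanSpace ℝ (Fin n)) {ε : ℝ} (hε : 0 < ε)
include hε

theorem bubble_rpow_four_div_sub_two (hn : n ≠ 2) (x : EuclideanSpace ℝ (Fin n)) :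
    bubble ξ ε x ^ (4 / ((n : ℝ) - 2)) = ε ^ 2 / (ε ^ 2 + ‖x - ξ‖ ^ 2) ^ 2 := by
  have hn' : (n : ℝ) - 2 ≠ 0 := sub_ne_zero.mpr (by exact_mod_cast hn)
  rw [bubble, ← Real.rpow_mul (by positivity), show ((n : ℝ) - 2) / 2 * (4 / ((n : ℝ) - 2)) = 2 by
    field_simp; ring, Real.rpow_two, div_pow]

theorem mul_bubble_eq_inner_single_mul_rpow (k : Fin n) (x : EuclideanSpace ℝ (Fin n)) :
    2 * ε * (x k - ξ k) / (ε ^ 2 + ‖x - ξ‖ ^ 2) * bubble ξ ε x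
      = 2 * ε ^ ((n : ℝ) / 2)
        * (⟪EuclideanSpace.single k 1, x - ξ⟫ * (ε ^ 2 + ‖x - ξ‖ ^ 2) ^ (-(n : ℝ) / 2)) := by
  have hD : 0 < ε ^ 2 + ‖x - ξ‖ ^ 2 := by positivity
  have hε_pow : ε ^ ((n : ℝ) / 2) = ε * ε ^ (((n : ℝ) - 2) / 2) := by
    rw [show (n : ℝ) / 2 = 1 + ((n : ℝ) - 2) / 2 by ring, Real.rpow_add hε, Real.rpow_one]
  have hD_pow : (ε ^ 2 + ‖x - ξ‖ ^ 2) ^ (-(n : ℝ) / 2)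
      = ((ε ^ 2 + ‖x - ξ‖ ^ 2) * (ε ^ 2 + ‖x - ξ‖ ^ 2) ^ (((n : ℝ) - 2) / 2))⁻¹ := by
    rw [show -(n : ℝ) / 2 = -(1 + ((n : ℝ) - 2) / 2) by ring, Real.rpow_neg hD.le,
      Real.rpow_add hD, Real.rpow_one]
  rw [bubble, Real.div_rpow hε.le hD.le, hε_pow, hD_pow, EuclideanSpace.inner_single_left]
  have : (ε ^ 2 + ‖x - ξ‖ ^ 2) ^ (((n : ℝ) - 2) / 2) ≠ 0 := by positivity
  field_simp
  simp

end

theorem stmt_2 (n : ℕ) (hn : 3 ≤ n) (ξ : EuclideanSpace ℝ (Fin n)) (ε : ℝ) (hε : 0 < ε)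
    (k : Fin n) (φ : EuclideanSpace ℝ (Fin n) → ℝ)
    (hφ : ∀ x, φ x = 2 * ε * (x k - ξ k) / (ε ^ 2 + ‖x - ξ‖ ^ 2) * bubble ξ ε x) :
    ∀ x, eLaplacian φ x
        + (n : ℝ) * ((n : ℝ) + 2) * bubble ξ ε x ^ ((4 : ℝ) / ((n : ℝ) - 2)) * φ x = 0 := by
  intro x
  have hφ_eq : φ = (2 * ε ^ ((n : ℝ) / 2)) • fun y =>
      ⟪EuclideanSpace.single k 1, y - ξ⟫ * (ε ^ 2 + ‖y - ξ‖ ^ 2) ^ (-(n : ℝ) / 2) :=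
    funext fun y => (hφ y).trans (mul_bubble_eq_inner_single_mul_rpow ξ hε k y)
  have hΔ := laplacian_inner_mul_rpow_neg_half_finrank (pow_pos hε 2) ξ
    (EuclideanSpace.single k 1) x
  rw [finrank_euclideanSpace_fin] at hΔ
  rw [eLaplacian_eq_laplacian, bubble_rpow_four_div_sub_two ξ hε (by omega), hφ_eq,
    laplacian_smul _ (contDiff_inner_mul_rpow (pow_pos hε 2) _ _ _).contDiffAt, hΔ]
  simp only [Pi.smul_apply, smul_eq_mul]
  ring
end

section
/- Let n ≥ 3 be an integer, ξ ∈ ℝⁿ and ε > 0, and let u_{(ξ,ε)} be the standard bubble. Then the functions |∇u_{(ξ,ε)}|² and u_{(ξ,ε)}^{2n/(n−2)} are integrable on ℝⁿ, and ∫_{ℝⁿ} |∇u_{(ξ,ε)}(x)|² dx = n(n−2) · ∫_{ℝⁿ} u_{(ξ,ε)}(x)^{2n/(n−2)} dx. -/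
/-!
Both integrands are radial about `ξ`. With `S = ε² + |x − ξ|²` one has
`|∇u|² = (n − 2)² εⁿ⁻² |x − ξ|² / Sⁿ` and `u^(2n/(n−2)) = εⁿ⁻² ε² / Sⁿ`, so in polar coordinates
the identity becomes `(n − 2) ∫₀^∞ rⁿ⁺¹ / (ε² + r²)ⁿ dr = n ε² ∫₀^∞ rⁿ⁻¹ / (ε² + r²)ⁿ dr`.
This is the vanishing of the integral of the derivative of `rⁿ / (ε² + r²)ⁿ⁻¹`,
which is zero at `0` and at infinity.
-/

open MeasureTheory

open Real Set Filter Topology Module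

section Radial

variable {ε : ℝ}

lemma integrableOn_Ioi_pow_div_sq_add_sq_pow (hε : 0 < ε) {k j : ℕ} (hkj : k + 2 ≤ 2 * j) :
    IntegrableOn (fun r : ℝ => r ^ k / (ε ^ 2 + r ^ 2) ^ j) (Ioi 0) := by
  have hcont : Continuous fun r : ℝ => r ^ k / (ε ^ 2 + r ^ 2) ^ j :=
    Continuous.div (by fun_prop) (by fun_prop) (fun r => by positivity)
  rw [← Ioc_union_Ioi_eq_Ioi zero_le_one]
  refine (hcont.integrableOn_Icc.mono_set Ioc_subset_Icc_self).union ?_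
  have hexp : (k : ℝ) - 2 * j < -1 := by
    have : (k : ℝ) + 2 ≤ 2 * j := by exact_mod_cast hkj
    linarith
  refine (integrableOn_Ioi_rpow_of_lt hexp one_pos).mono' hcont.aestronglyMeasurable.restrict ?_
  filter_upwards [ae_restrict_mem measurableSet_Ioi] with r (hr : 1 < r)
  have hr0 : 0 < r := one_pos.trans hr
  rw [norm_of_nonneg (by positivity)]
  calc r ^ k / (ε ^ 2 + r ^ 2) ^ j ≤ r ^ k / (r ^ 2) ^ j := by
        gcongr
        linarith [sq_nonneg ε]
    _ = r ^ ((k : ℝ) - 2 * j) := by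
        rw [← pow_mul, rpow_sub hr0, rpow_natCast, ← rpow_natCast r (2 * j)]
        push_cast
        rfl

lemma tendsto_pow_div_sq_add_sq_pow_atTop {k j : ℕ} (hkj : k < 2 * j) :
    Tendsto (fun r : ℝ => r ^ k / (ε ^ 2 + r ^ 2) ^ j) atTop (𝓝 0) := by
  refine squeeze_zero' ?_ ?_ tendsto_inv_atTop_zero
  · filter_upwards [eventually_ge_atTop 0] with r hr
    positivity
  · filter_upwards [eventually_ge_atTop 1] with r hr
    have hr0 : 0 < r := one_pos.trans_le hr
    calc r ^ k / (ε ^ 2 + r ^ 2) ^ j ≤ r ^ k / (r ^ 2) ^ j := by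
          gcongr
          linarith [sq_nonneg ε]
      _ ≤ r⁻¹ := by
          rw [div_le_iff₀ (by positivity), ← pow_mul, inv_mul_eq_div, le_div_iff₀ hr0, ← pow_succ]
          exact pow_le_pow_right₀ hr hkj

lemma sub_two_mul_integral_Ioi_pow_div_sq_add_sq_pow (hε : 0 < ε) {n : ℕ} (hn : 3 ≤ n) :
    ((n : ℝ) - 2) * ∫ r in Ioi 0, r ^ (n + 1) / (ε ^ 2 + r ^ 2) ^ n
      = n * ε ^ 2 * ∫ r in Ioi 0, r ^ (n - 1) / (ε ^ 2 + r ^ 2) ^ n := by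
  obtain ⟨m, rfl⟩ : ∃ m, n = m + 3 := ⟨n - 3, by omega⟩
  simp only [show m + 3 - 1 = m + 2 by omega]
  have hint₁ := integrableOn_Ioi_pow_div_sq_add_sq_pow hε (k := m + 4) (j := m + 3) (by omega)
  have hint₂ := integrableOn_Ioi_pow_div_sq_add_sq_pow hε (k := m + 2) (j := m + 3) (by omega)
  have hderiv : ∀ r : ℝ, HasDerivAt (fun r => r ^ (m + 3) / (ε ^ 2 + r ^ 2) ^ (m + 2))
      ((m + 3) * ε ^ 2 * (r ^ (m + 2) / (ε ^ 2 + r ^ 2) ^ (m + 3))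
        - (m + 1) * (r ^ (m + 4) / (ε ^ 2 + r ^ 2) ^ (m + 3))) r := by
    intro r
    have hS : 0 < ε ^ 2 + r ^ 2 := by positivity
    refine ((hasDerivAt_pow (m + 3) r).fun_div
      (((hasDerivAt_pow 2 r).const_add (ε ^ 2)).fun_pow (m + 2)) (by positivity)).congr_deriv ?_
    simp only [Nat.add_one_sub_one]
    field_simp
    push_cast
    ring
  have hibp := integral_Ioi_of_hasDerivAt_of_tendsto (by fun_prop (disch := positivity))
    (fun r _ => hderiv r) ((hint₂.const_mul _).sub (hint₁.const_mul _))
    (tendsto_pow_div_sq_add_sq_pow_atTop (by omega))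
  rw [integral_sub (hint₂.const_mul _) (hint₁.const_mul _), integral_const_mul,
    integral_const_mul] at hibp
  push_cast
  norm_num at hibp
  linarith

variable {E : Type*} [NormedAddCommGroup E] [NormedSpace ℝ E] [FiniteDimensional ℝ E]
  [MeasurableSpace E] [BorelSpace E] (μ : Measure E) [μ.IsAddHaarMeasure]

lemma integrable_norm_sub_pow_div_sq_add_sq_pow [Nontrivial E] (hε : 0 < ε) (ξ : E) {k j : ℕ}
    (hkj : finrank ℝ E + k < 2 * j) :
    Integrable (fun x => ‖x - ξ‖ ^ k / (ε ^ 2 + ‖x - ξ‖ ^ 2) ^ j) μ := by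
  refine Integrable.comp_sub_right (f := fun x => ‖x‖ ^ k / (ε ^ 2 + ‖x‖ ^ 2) ^ j) ?_ ξ
  refine (integrable_fun_norm_addHaar μ (f := fun r => r ^ k / (ε ^ 2 + r ^ 2) ^ j)).2 ?_
  have hd := finrank_pos (R := ℝ) (M := E)
  refine (integrableOn_Ioi_pow_div_sq_add_sq_pow hε (k := finrank ℝ E - 1 + k) (j := j)
    (by omega)).congr_fun (fun r _ => ?_) measurableSet_Ioi
  simp only [smul_eq_mul, pow_add, mul_div_assoc]

lemma sub_two_mul_integral_norm_sq_div_sq_add_sq_pow (hε : 0 < ε) (ξ : E)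
    (hd : 3 ≤ finrank ℝ E) :
    ((finrank ℝ E : ℝ) - 2) * ∫ x, ‖x - ξ‖ ^ 2 / (ε ^ 2 + ‖x - ξ‖ ^ 2) ^ finrank ℝ E ∂μ
      = finrank ℝ E * ε ^ 2 * ∫ x, ((ε ^ 2 + ‖x - ξ‖ ^ 2) ^ finrank ℝ E)⁻¹ ∂μ := by
  have : Nontrivial E := Module.nontrivial_of_finrank_pos (R := ℝ) (by omega)
  rw [integral_sub_right_eq_self (fun x => ‖x‖ ^ 2 / (ε ^ 2 + ‖x‖ ^ 2) ^ finrank ℝ E) ξ,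
    integral_sub_right_eq_self (fun x => ((ε ^ 2 + ‖x‖ ^ 2) ^ finrank ℝ E)⁻¹) ξ,
    integral_fun_norm_addHaar μ (fun r => r ^ 2 / (ε ^ 2 + r ^ 2) ^ finrank ℝ E),
    integral_fun_norm_addHaar μ (fun r => ((ε ^ 2 + r ^ 2) ^ finrank ℝ E)⁻¹)]
  set d := finrank ℝ E
  have h₂ (y : ℝ) :
      y ^ (d - 1) • (y ^ 2 / (ε ^ 2 + y ^ 2) ^ d) = y ^ (d + 1) / (ε ^ 2 + y ^ 2) ^ d := by
    rw [smul_eq_mul, mul_div_assoc', ← pow_add, show d - 1 + 2 = d + 1 by omega]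
  have h₀ (y : ℝ) :
      y ^ (d - 1) • ((ε ^ 2 + y ^ 2) ^ d)⁻¹ = y ^ (d - 1) / (ε ^ 2 + y ^ 2) ^ d := rfl
  simp only [h₂, h₀, nsmul_eq_mul, smul_eq_mul]
  linear_combination
    (d * μ.real (Metric.ball 0 1)) * sub_two_mul_integral_Ioi_pow_div_sq_add_sq_pow hε hd

end Radial

section Gradient

variable {E : Type*} [NormedAddCommGroup E] [InnerProductSpace ℝ E] [CompleteSpace E]

lemma hasDerivAt_div_add_rpow {ε t : ℝ} (hε : 0 < ε) (ht : 0 ≤ t) (p : ℝ) :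
    HasDerivAt (fun t => (ε / (ε ^ 2 + t)) ^ p) (-p * (ε / (ε ^ 2 + t)) ^ p / (ε ^ 2 + t)) t := by
  have hS : 0 < ε ^ 2 + t := by positivity
  have hdiv : HasDerivAt (fun t => ε / (ε ^ 2 + t)) (-ε / (ε ^ 2 + t) ^ 2) t := by
    simpa [neg_div] using
      (hasDerivAt_const t ε).fun_div ((hasDerivAt_id t).const_add (ε ^ 2)) hS.ne'
  convert hdiv.rpow_const (Or.inl (by positivity)) using 1
  rw [rpow_sub_one (by positivity)]
  field_simp

lemma hasGradientAt_div_add_norm_sq_rpow {ε : ℝ} (hε : 0 < ε) (p : ℝ) (ξ x : E) :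
    HasGradientAt (fun y => (ε / (ε ^ 2 + ‖y - ξ‖ ^ 2)) ^ p)
      ((-2 * p * (ε / (ε ^ 2 + ‖x - ξ‖ ^ 2)) ^ p / (ε ^ 2 + ‖x - ξ‖ ^ 2)) • (x - ξ)) x := by
  have h := (hasDerivAt_div_add_rpow hε (sq_nonneg ‖x - ξ‖) p).comp_hasFDerivAt x
    ((hasFDerivAt_id x).sub_const ξ).norm_sq
  rw [hasGradientAt_iff_hasFDerivAt]
  refine h.congr_fderiv ?_
  ext y
  simp
  ring

end Gradient

section Bubble

variable {n : ℕ} {ε : ℝ}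

lemma hasGradientAt_bubble (hε : 0 < ε) (ξ x : EuclideanSpace ℝ (Fin n)) :
    HasGradientAt (bubble ξ ε)
      ((-((n : ℝ) - 2) * bubble ξ ε x / (ε ^ 2 + ‖x - ξ‖ ^ 2)) • (x - ξ)) x := by
  have h : HasGradientAt (bubble ξ ε) _ x :=
    hasGradientAt_div_add_norm_sq_rpow hε (((n : ℝ) - 2) / 2) ξ x
  convert h using 2
  rw [bubble]
  ring

lemma bubble_sq (hn : 2 ≤ n) (hε : 0 < ε) (ξ x : EuclideanSpace ℝ (Fin n)) :
    bubble ξ ε x ^ 2 = (ε / (ε ^ 2 + ‖x - ξ‖ ^ 2)) ^ (n - 2) := by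
  rw [bubble, ← rpow_natCast _ 2, ← rpow_mul (by positivity), ← rpow_natCast _ (n - 2),
    Nat.cast_sub hn]
  ring_nf

lemma norm_gradient_bubble_sq (hn : 2 ≤ n) (hε : 0 < ε) (ξ x : EuclideanSpace ℝ (Fin n)) :
    ‖gradient (bubble ξ ε) x‖ ^ 2
      = ((n : ℝ) - 2) ^ 2 * ε ^ (n - 2) * (‖x - ξ‖ ^ 2 / (ε ^ 2 + ‖x - ξ‖ ^ 2) ^ n) := by
  rw [(hasGradientAt_bubble hε ξ x).gradient, norm_smul, mul_pow, norm_eq_abs, sq_abs, div_pow,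
    mul_pow, bubble_sq hn hε ξ x, div_pow]
  obtain ⟨m, rfl⟩ := Nat.exists_eq_add_of_le' hn
  have : 0 < ε ^ 2 + ‖x - ξ‖ ^ 2 := by positivity
  simp only [Nat.add_sub_cancel]
  field_simp
  ring

lemma bubble_rpow_critical (hn : 2 < n) (hε : 0 < ε) (ξ x : EuclideanSpace ℝ (Fin n)) :
    bubble ξ ε x ^ (2 * (n : ℝ) / ((n : ℝ) - 2)) = ε ^ n * ((ε ^ 2 + ‖x - ξ‖ ^ 2) ^ n)⁻¹ := by
  have : (n : ℝ) - 2 ≠ 0 := by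
    have : (2 : ℝ) < n := by exact_mod_cast hn
    linarith
  rw [bubble, ← rpow_mul (by positivity), show ((n : ℝ) - 2) / 2 * (2 * n / (n - 2)) = n by
    field_simp, rpow_natCast, div_pow, div_eq_mul_inv]

end Bubble

theorem stmt_4 (n : ℕ) (hn : 3 ≤ n) (ξ : EuclideanSpace ℝ (Fin n)) (ε : ℝ) (hε : 0 < ε) :
    Integrable (fun x : EuclideanSpace ℝ (Fin n) => ‖gradient (bubble ξ ε) x‖ ^ 2) ∧
    Integrable (fun x : EuclideanSpace ℝ (Fin n) =>
        bubble ξ ε x ^ (2 * (n : ℝ) / ((n : ℝ) - 2))) ∧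
    ∫ x : EuclideanSpace ℝ (Fin n), ‖gradient (bubble ξ ε) x‖ ^ 2
      = (n : ℝ) * ((n : ℝ) - 2)
        * ∫ x : EuclideanSpace ℝ (Fin n), bubble ξ ε x ^ (2 * (n : ℝ) / ((n : ℝ) - 2)) := by
  have : NeZero n := ⟨by omega⟩
  have hd : finrank ℝ (EuclideanSpace ℝ (Fin n)) = n := finrank_euclideanSpace_fin
  have hint₂ := integrable_norm_sub_pow_div_sq_add_sq_pow volume hε ξ (k := 2) (j := n)
    (by omega)
  have hint₀ : Integrable fun x : EuclideanSpace ℝ (Fin n) => ((ε ^ 2 + ‖x - ξ‖ ^ 2) ^ n)⁻¹ := by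
    simpa using integrable_norm_sub_pow_div_sq_add_sq_pow volume hε ξ (k := 0) (j := n)
      (by omega)
  have key := sub_two_mul_integral_norm_sq_div_sq_add_sq_pow volume hε ξ (by omega)
  rw [hd] at key
  simp only [norm_gradient_bubble_sq (by omega : 2 ≤ n) hε ξ,
    bubble_rpow_critical (by omega : 2 < n) hε ξ]
  refine ⟨hint₂.const_mul _, hint₀.const_mul _, ?_⟩
  have hεn : ε ^ n = ε ^ (n - 2) * ε ^ 2 := by rw [← pow_add, Nat.sub_add_cancel (by omega)]
  rw [integral_const_mul, integral_const_mul, hεn]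
  linear_combination ((n : ℝ) - 2) * ε ^ (n - 2) * key
end

section
/- Let n be a positive integer, let W: {1,…,n}⁴ → ℝ be any tensor, and define H_{ik}(x) = Σ_{p,q=1}^n W_{ipkq} x_p x_q. Let η: ℝ → ℝ be a smooth function with η(t) = 1 for t ≤ 1 and η(t) = 0 for t ≥ 2, let N₀ ≥ 1 be an integer, and for each integer N ≥ N₀ set y_N = (1/N, 0, …, 0) ∈ ℝⁿ. Then for each pair of indices i,k, the series h_{ik}(x) = Σ_{N=N₀}^∞ η(4N² |x − y_N|) · 2^{−N} (2^{−N} − |x − y_N|²) · H_{ik}(x − y_N) converges for every x ∈ ℝⁿ and defines a C^∞ (infinitely differentiable) function h_{ik}: ℝⁿ → ℝ. -/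
/-!
Write `a = 2⁻ᴺ`, `c = 4N²` and `χ = η ∘ ‖·‖`, which is smooth (it is constant near `0`) and
compactly supported. Since `H` is a homogeneous quadratic, the `N`-th term equals
`(a² / c²) P (c (x - y_N)) - (a / c⁴) Q (c (x - y_N))` for the two fixed smooth compactly
supported profiles `P = χ H` and `Q = χ ‖·‖² H`. Rescaling by `c` multiplies the `j`-th derivative
by `cʲ`, so the `j`-th derivatives of the terms are bounded by a multiple of `2⁻ᴺ (4N²)ʲ`, which is
summable for every `j`; the series is then smooth by termwise differentiation.
-/

/-- The quadratic polynomial `H_{ik}(x) = Σ_{p,q} W_{ipkq} x_p x_q` on `ℝⁿ`. -/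
def Hqf {n : ℕ} (W : Fin n → Fin n → Fin n → Fin n → ℝ) (i k : Fin n)
    (x : EuclideanSpace ℝ (Fin n)) : ℝ :=
  ∑ p, ∑ q, W i p k q * x p * x q

open Filter Topology
open scoped ContDiff

lemma abs_div_pow_le_self {a c : ℝ} (ha : 0 ≤ a) (hc : 1 ≤ c) {k : ℕ} : |a / c ^ k| ≤ a := by
  rw [abs_of_nonneg (by positivity)]
  exact div_le_self ha (one_le_pow₀ hc)

section Rescaling

variable {E F : Type*} [NormedAddCommGroup E] [NormedSpace ℝ E]
  [NormedAddCommGroup F] [NormedSpace ℝ F]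

lemma exists_bound_iteratedFDeriv_of_hasCompactSupport {u : E → F}
    (hsupp : HasCompactSupport u) (hu : ContDiff ℝ ∞ u) (j : ℕ) :
    ∃ C, ∀ x, ‖iteratedFDeriv ℝ j u x‖ ≤ C :=
  (hsupp.iteratedFDeriv j).exists_bound_of_continuous
    (hu.continuous_iteratedFDeriv (mod_cast le_top))

lemma norm_iteratedFDeriv_comp_smul_sub_le {u : E → F} {j : ℕ} (hu : ContDiff ℝ j u)
    (c : ℝ) (a x : E) :
    ‖iteratedFDeriv ℝ j (fun z => u (c • (z - a))) x‖ ≤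
      |c| ^ j * ‖iteratedFDeriv ℝ j u (c • (x - a))‖ := by
  set L : E →L[ℝ] E := c • ContinuousLinearMap.id ℝ E
  have hL : ‖L‖ ≤ |c| := L.opNorm_le_bound (abs_nonneg c) fun z => by simp [L, norm_smul]
  rw [iteratedFDeriv_comp_sub (f := fun z => u (c • z)),
    show (fun z => u (c • z)) = u ∘ L from rfl, L.iteratedFDeriv_comp_right hu _ le_rfl]
  calc _ ≤ ‖iteratedFDeriv ℝ j u (L (x - a))‖ * ∏ _ : Fin j, ‖L‖ :=
        ContinuousMultilinearMap.norm_compContinuousLinearMap_le _ _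
    _ ≤ ‖iteratedFDeriv ℝ j u (c • (x - a))‖ * |c| ^ j := by
        rw [Finset.prod_const, Finset.card_fin]
        gcongr
        rfl
    _ = _ := mul_comm _ _

variable [CompleteSpace F] {ι : Type*} {u : E → F} {w c : ι → ℝ} {a : ι → E}

lemma summable_smul_comp_smul_sub (hu : ∃ C, ∀ x, ‖u x‖ ≤ C) (hw : Summable fun N => |w N|)
    (x : E) : Summable fun N => w N • u (c N • (x - a N)) := by
  obtain ⟨C, hC⟩ := hu
  refine (hw.mul_right C).of_norm_bounded fun N => ?_
  rw [norm_smul, Real.norm_eq_abs]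
  exact mul_le_mul_of_nonneg_left (hC _) (abs_nonneg _)

lemma contDiff_tsum_smul_comp_smul_sub (hu : ContDiff ℝ ∞ u)
    (hbdd : ∀ j : ℕ, ∃ C, ∀ x, ‖iteratedFDeriv ℝ j u x‖ ≤ C)
    (hw : ∀ j : ℕ, Summable fun N => |w N| * |c N| ^ j) :
    ContDiff ℝ ∞ fun x => ∑' N, w N • u (c N • (x - a N)) := by
  choose C hC using hbdd
  refine contDiff_tsum (v := fun j N => C j * (|w N| * |c N| ^ j)) (fun N => by fun_prop)
    (fun j _ => (hw j).mul_left _) fun j N x _ => ?_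
  have hu_j : ContDiff ℝ j u := hu.of_le (mod_cast le_top)
  have hterm : ContDiff ℝ j fun z => u (c N • (z - a N)) := by fun_prop
  rw [iteratedFDeriv_const_smul_apply' hterm.contDiffAt, norm_smul, Real.norm_eq_abs]
  calc |w N| * ‖iteratedFDeriv ℝ j (fun z => u (c N • (z - a N))) x‖
      ≤ |w N| * (|c N| ^ j * C j) := by
        gcongr
        exact (norm_iteratedFDeriv_comp_smul_sub_le hu_j _ _ _).trans
          (mul_le_mul_of_nonneg_left (hC _ _) (by positivity))
    _ = C j * (|w N| * |c N| ^ j) := by ring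

end Rescaling

section Cutoff

variable {E : Type*} [NormedAddCommGroup E] {η : ℝ → ℝ}

lemma contDiff_comp_norm [InnerProductSpace ℝ E] {n : WithTop ℕ∞} (hη : ContDiff ℝ n η)
    (h0 : ∀ᶠ t in 𝓝 0, η t = η 0) : ContDiff ℝ n fun x : E => η ‖x‖ := by
  refine contDiff_iff_contDiffAt.2 fun x => ?_
  rcases eq_or_ne x 0 with rfl | hx
  · have hconst : (fun z : E => η ‖z‖) =ᶠ[𝓝 0] fun _ => η 0 :=
      (continuous_norm.tendsto' (0 : E) 0 norm_zero).eventually h0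
    exact contDiffAt_const.congr_of_eventuallyEq hconst
  · exact hη.contDiffAt.comp x (contDiffAt_norm ℝ hx)

lemma hasCompactSupport_comp_norm [ProperSpace E] {R : ℝ} (hη : ∀ t, R ≤ t → η t = 0) :
    HasCompactSupport fun x : E => η ‖x‖ := by
  refine HasCompactSupport.intro (isCompact_closedBall (0 : E) R) fun x hx => hη _ ?_
  rw [Metric.mem_closedBall, dist_zero_right, not_le] at hx
  exact hx.le

lemma cutoff_term_eq_rescaled [NormedSpace ℝ E] {H : E → ℝ}
    (hH : ∀ (c : ℝ) z, H (c • z) = c ^ 2 * H z) {c : ℝ} (hc : 0 < c) (a : ℝ) (z : E) :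
    η (c * ‖z‖) * (a * ((a - ‖z‖ ^ 2) * H z)) =
      a ^ 2 / c ^ 2 * (η ‖c • z‖ * H (c • z)) -
        a / c ^ 4 * (η ‖c • z‖ * (‖c • z‖ ^ 2 * H (c • z))) := by
  rw [norm_smul, Real.norm_eq_abs, abs_of_pos hc, hH]
  field_simp

end Cutoff

lemma summable_abs_mul_pow_of_abs_le_two_zpow_neg {N₀ : ℕ} {w : {N : ℕ // N₀ ≤ N} → ℝ}
    (hw : ∀ N, |w N| ≤ 2 ^ (-((N : ℕ) : ℤ))) (j : ℕ) :
    Summable fun N : {N : ℕ // N₀ ≤ N} => |w N| * |4 * ((N : ℕ) : ℝ) ^ 2| ^ j := by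
  have hgeom : Summable fun N : ℕ => 4 ^ j * ((N : ℝ) ^ (2 * j) * 2⁻¹ ^ N) :=
    (summable_pow_mul_geometric_of_norm_lt_one (2 * j) (r := (2 : ℝ)⁻¹) (by norm_num)).mul_left _
  refine Summable.of_nonneg_of_le (fun _ => by positivity) (fun N => ?_) (hgeom.subtype _)
  calc |w N| * |4 * ((N : ℕ) : ℝ) ^ 2| ^ j
      ≤ 2 ^ (-((N : ℕ) : ℤ)) * |4 * ((N : ℕ) : ℝ) ^ 2| ^ j := by gcongr; exact hw N
    _ = 4 ^ j * (((N : ℕ) : ℝ) ^ (2 * j) * 2⁻¹ ^ (N : ℕ)) := by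
        rw [abs_of_nonneg (by positivity), zpow_neg, zpow_natCast, mul_pow, ← pow_mul, inv_pow]
        ring

lemma Hqf_smul {n : ℕ} (W : Fin n → Fin n → Fin n → Fin n → ℝ) (i k : Fin n)
    (c : ℝ) (z : EuclideanSpace ℝ (Fin n)) :
    Hqf W i k (c • z) = c ^ 2 * Hqf W i k z := by
  simp only [Hqf, Finset.mul_sum, PiLp.smul_apply, smul_eq_mul]
  exact Finset.sum_congr rfl fun p _ => Finset.sum_congr rfl fun q _ => by ring

lemma contDiff_Hqf {n : ℕ} (W : Fin n → Fin n → Fin n → Fin n → ℝ) (i k : Fin n) :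
    ContDiff ℝ ∞ (Hqf W i k) := by
  unfold Hqf
  fun_prop

theorem stmt_11_general (n : ℕ) (W : Fin n → Fin n → Fin n → Fin n → ℝ)
    (η : ℝ → ℝ) (hη : ContDiff ℝ (⊤ : ℕ∞) η)
    (hη1 : ∀ t : ℝ, t ≤ 1 → η t = 1) (hη2 : ∀ t : ℝ, 2 ≤ t → η t = 0)
    (N₀ : ℕ) (hN₀ : 1 ≤ N₀)
    (y : ℕ → EuclideanSpace ℝ (Fin n)) :
    ∀ i k : Fin n, ∃ h : EuclideanSpace ℝ (Fin n) → ℝ,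
      (∀ x : EuclideanSpace ℝ (Fin n),
        HasSum
          (fun N : {N : ℕ // N₀ ≤ N} =>
            η (4 * ((N : ℕ) : ℝ) ^ 2 * ‖x - y N‖) *
              ((2 : ℝ) ^ (-((N : ℕ) : ℤ)) *
                (((2 : ℝ) ^ (-((N : ℕ) : ℤ)) - ‖x - y N‖ ^ 2) * Hqf W i k (x - y N))))
          (h x)) ∧
      ContDiff ℝ (⊤ : ℕ∞) h := by
  intro i k
  set a : {N : ℕ // N₀ ≤ N} → ℝ := fun N => 2 ^ (-((N : ℕ) : ℤ))
  set c : {N : ℕ // N₀ ≤ N} → ℝ := fun N => 4 * ((N : ℕ) : ℝ) ^ 2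
  set P : EuclideanSpace ℝ (Fin n) → ℝ := fun w => η ‖w‖ * Hqf W i k w
  set Q : EuclideanSpace ℝ (Fin n) → ℝ := fun w => η ‖w‖ * (‖w‖ ^ 2 * Hqf W i k w)
  have hχ : ContDiff ℝ ∞ fun w : EuclideanSpace ℝ (Fin n) => η ‖w‖ :=
    contDiff_comp_norm hη (eventually_of_mem (Iic_mem_nhds one_pos) fun t ht =>
      (hη1 t ht).trans (hη1 0 zero_le_one).symm)
  have hχ_supp : HasCompactSupport fun w : EuclideanSpace ℝ (Fin n) => η ‖w‖ :=
    hasCompactSupport_comp_norm hη2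
  have hP : ContDiff ℝ ∞ P := hχ.mul (contDiff_Hqf W i k)
  have hQ : ContDiff ℝ ∞ Q := hχ.mul ((contDiff_norm_sq ℝ).mul (contDiff_Hqf W i k))
  have hPb : ∀ j : ℕ, ∃ C, ∀ w, ‖iteratedFDeriv ℝ j P w‖ ≤ C :=
    exists_bound_iteratedFDeriv_of_hasCompactSupport hχ_supp.mul_right hP
  have hQb : ∀ j : ℕ, ∃ C, ∀ w, ‖iteratedFDeriv ℝ j Q w‖ ≤ C :=
    exists_bound_iteratedFDeriv_of_hasCompactSupport hχ_supp.mul_right hQ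
  have hc : ∀ N, 1 ≤ c N := fun N => by
    have : (1 : ℝ) ≤ (N : ℕ) := mod_cast hN₀.trans N.2
    nlinarith
  have ha : ∀ N, 0 ≤ a N ∧ a N ≤ 1 := fun N =>
    ⟨by positivity, zpow_le_one_of_nonpos₀ one_le_two (by omega)⟩
  have hw₁ : ∀ j, Summable fun N => |a N ^ 2 / c N ^ 2| * |c N| ^ j :=
    summable_abs_mul_pow_of_abs_le_two_zpow_neg fun N =>
      (abs_div_pow_le_self (by positivity) (hc N)).trans
        (pow_le_of_le_one (ha N).1 (ha N).2 two_ne_zero)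
  have hw₂ : ∀ j, Summable fun N => |a N / c N ^ 4| * |c N| ^ j :=
    summable_abs_mul_pow_of_abs_le_two_zpow_neg fun N => abs_div_pow_le_self (ha N).1 (hc N)
  refine ⟨fun x => ∑' N, (a N ^ 2 / c N ^ 2) • P (c N • (x - y N)) -
      ∑' N, (a N / c N ^ 4) • Q (c N • (x - y N)), fun x => ?_,
    (contDiff_tsum_smul_comp_smul_sub hP hPb hw₁).sub (contDiff_tsum_smul_comp_smul_sub hQ hQb hw₂)⟩
  have hP₀ : Summable fun N => (a N ^ 2 / c N ^ 2) • P (c N • (x - y N)) :=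
    summable_smul_comp_smul_sub
      (by simpa only [norm_iteratedFDeriv_zero] using hPb 0)
      (by simpa only [pow_zero, mul_one] using hw₁ 0) x
  have hQ₀ : Summable fun N => (a N / c N ^ 4) • Q (c N • (x - y N)) :=
    summable_smul_comp_smul_sub
      (by simpa only [norm_iteratedFDeriv_zero] using hQb 0)
      (by simpa only [pow_zero, mul_one] using hw₂ 0) x
  exact (hP₀.hasSum.sub hQ₀.hasSum).congr_fun fun N =>
    cutoff_term_eq_rescaled (Hqf_smul W i k) (zero_lt_one.trans_le (hc N)) (a N) (x - y N)

theorem stmt_11 (n : ℕ) (hn : 0 < n) (W : Fin n → Fin n → Fin n → Fin n → ℝ)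
    (η : ℝ → ℝ) (hη : ContDiff ℝ (⊤ : ℕ∞) η)
    (hη1 : ∀ t : ℝ, t ≤ 1 → η t = 1) (hη2 : ∀ t : ℝ, 2 ≤ t → η t = 0)
    (N₀ : ℕ) (hN₀ : 1 ≤ N₀)
    (y : ℕ → EuclideanSpace ℝ (Fin n))
    (hy : ∀ N : ℕ, y N = EuclideanSpace.single ⟨0, hn⟩ ((N : ℝ)⁻¹)) :
    ∀ i k : Fin n, ∃ h : EuclideanSpace ℝ (Fin n) → ℝ,
      (∀ x : EuclideanSpace ℝ (Fin n),
        HasSum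
          (fun N : {N : ℕ // N₀ ≤ N} =>
            η (4 * ((N : ℕ) : ℝ) ^ 2 * ‖x - y N‖) *
              ((2 : ℝ) ^ (-((N : ℕ) : ℤ)) *
                (((2 : ℝ) ^ (-((N : ℕ) : ℤ)) - ‖x - y N‖ ^ 2) * Hqf W i k (x - y N))))
          (h x)) ∧
      ContDiff ℝ (⊤ : ℕ∞) h :=
  stmt_11_general n W η hη hη1 hη2 N₀ hN₀ y
end
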